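/- Let C be the Cartan matrix of a simply-laced Dynkin diagram D with vertex set I, and let a be an admissible automorphism of D (i.e., a graph automorphism such that no two vertices in the same a-orbit are joined by an edge). Define the matrix C' indexed by the orbit set I/a by C'_{ij} = (1/|i|) ∑_{(x,y) ∈ i×j} C_{xy}. Then C' is a (generalized) Cartan matrix: its diagonal entries equal 2, its off-diagonal entries are nonpositive integers, and C'_{ij} = 0 if and only if C'_{ji} = 0. -/

import Mathlib

open Finset

/-- The orbit of `x` under the permutation `a`, as a `Finset`. -/
noncomputable def permOrbit {I : Type*} [Fintype I] [DecidableEq I] (a : Equiv.Perm I) (x : I) : Finset I :=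
  (Finset.range (orderOf a)).image (fun k => (a ^ k) x)

/-- The Cartan matrix of a simple graph: `2` on the diagonal, `-1` for adjacent vertices,
`0` otherwise. -/
def graphCartan {I : Type*} [DecidableEq I] (g : SimpleGraph I) [DecidableRel g.Adj]
    (x y : I) : ℤ :=
  if x = y then 2 else if g.Adj x y then -1 else 0

/-- The folded matrix `C'` on orbit representatives:
`C'_{𝐢𝐣} = (1/|𝐢|) ∑_{(x,y) ∈ 𝐢 × 𝐣} C_{xy}`. -/
noncomputable def foldedCartan' {I : Type*} [Fintype I] [DecidableEq I] (g : SimpleGraph I)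
    [DecidableRel g.Adj] (a : Equiv.Perm I) (x y : I) : ℚ :=
  (1 / (permOrbit a x).card : ℚ) *
    ∑ p ∈ (permOrbit a x) ×ˢ (permOrbit a y), (graphCartan g p.1 p.2 : ℚ)

/-!
Because `a` is a graph automorphism, the row sum `∑_{y' ∈ 𝐣} C_{x y'}` is the same for
every `x ∈ 𝐢`; hence `C'_{𝐢𝐣}` equals this row sum, an integer. For `𝐣 = 𝐢` admissibility
leaves only the term `C_{xx} = 2`, and for `𝐣 ≠ 𝐢` every term is `0` or `-1`. Finally `C` is
symmetric, so `|𝐢| C'_{𝐢𝐣} = |𝐣| C'_{𝐣𝐢}`, which gives the symmetry of the zero pattern.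
-/

theorem Equiv.Perm.invariant_pow {I R : Type*} {a : Equiv.Perm I} {M : I → I → R}
    (hM : ∀ u v, M (a u) (a v) = M u v) (k : ℕ) (u v : I) :
    M ((a ^ k) u) ((a ^ k) v) = M u v := by
  induction k with
  | zero => rfl
  | succ k ih => rw [pow_succ', Equiv.Perm.mul_apply, Equiv.Perm.mul_apply, hM, ih]

namespace permOrbit

variable {I : Type*} [Fintype I] [DecidableEq I] (a : Equiv.Perm I)

theorem mem_iff_sameCycle {x y : I} : y ∈ permOrbit a x ↔ a.SameCycle x y := by
  simp only [permOrbit, mem_image, mem_range]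
  constructor
  · rintro ⟨k, -, rfl⟩
    exact ⟨k, by simp⟩
  · exact fun h => h.exists_pow_eq'

theorem mem_self (x : I) : x ∈ permOrbit a x :=
  (mem_iff_sameCycle a).2 (Equiv.Perm.SameCycle.refl a x)

theorem card_pos (x : I) : 0 < #(permOrbit a x) :=
  Finset.card_pos.2 ⟨x, mem_self a x⟩

theorem cast_card_ne_zero {K : Type*} [AddMonoidWithOne K] [CharZero K] (x : I) :
    (#(permOrbit a x) : K) ≠ 0 :=
  Nat.cast_ne_zero.2 (card_pos a x).ne'

theorem mem_comm {x y : I} : y ∈ permOrbit a x ↔ x ∈ permOrbit a y := by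
  simp only [mem_iff_sameCycle, Equiv.Perm.sameCycle_comm]

theorem eq_of_mem {x y : I} (h : y ∈ permOrbit a x) : permOrbit a y = permOrbit a x := by
  ext z
  simp only [mem_iff_sameCycle] at h ⊢
  exact ⟨h.trans, h.symm.trans⟩

theorem pow_apply_mem_iff (k : ℕ) {x y : I} :
    (a ^ k) y ∈ permOrbit a x ↔ y ∈ permOrbit a x := by
  simp only [mem_iff_sameCycle, Equiv.Perm.sameCycle_pow_right]

section InvariantMatrix

variable {R : Type*} [AddCommMonoid R] {M : I → I → R} {a}

theorem sum_row_eq_of_mem (hM : ∀ u v, M (a u) (a v) = M u v) {x x' : I}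
    (hx' : x' ∈ permOrbit a x) (y : I) :
    ∑ y' ∈ permOrbit a y, M x' y' = ∑ y' ∈ permOrbit a y, M x y' := by
  obtain ⟨k, -, rfl⟩ := mem_image.1 hx'
  exact (sum_equiv (a ^ k) (fun _ => (pow_apply_mem_iff a k).symm)
    fun y' _ => (Equiv.Perm.invariant_pow hM k x y').symm).symm

theorem sum_product_eq_card_nsmul (hM : ∀ u v, M (a u) (a v) = M u v) (x y : I) :
    ∑ p ∈ permOrbit a x ×ˢ permOrbit a y, M p.1 p.2 =
      #(permOrbit a x) • ∑ y' ∈ permOrbit a y, M x y' := by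
  rw [sum_product, sum_congr rfl fun x' hx' => sum_row_eq_of_mem hM hx' y, sum_const]

end InvariantMatrix

end permOrbit

section graphCartan

variable {I : Type*} [DecidableEq I] (g : SimpleGraph I) [DecidableRel g.Adj]

theorem graphCartan_comm (u v : I) : graphCartan g u v = graphCartan g v u := by
  simp only [graphCartan, eq_comm, g.adj_comm]

theorem graphCartan_apply_apply {a : Equiv.Perm I} (haut : ∀ x y, g.Adj (a x) (a y) ↔ g.Adj x y)
    (u v : I) : graphCartan g (a u) (a v) = graphCartan g u v := by
  simp only [graphCartan, haut, a.injective.eq_iff]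

theorem graphCartan_of_not_adj {u v : I} (h : ¬ g.Adj u v) :
    graphCartan g u v = if u = v then 2 else 0 := by
  simp [graphCartan, h]

theorem graphCartan_nonpos_of_ne {u v : I} (h : u ≠ v) : graphCartan g u v ≤ 0 := by
  unfold graphCartan
  split_ifs <;> simp_all

end graphCartan

section foldedCartan

variable {I : Type*} [Fintype I] [DecidableEq I] (g : SimpleGraph I) [DecidableRel g.Adj]
  {a : Equiv.Perm I}

theorem foldedCartan'_mul_card (x y : I) :
    foldedCartan' g a x y * #(permOrbit a x) =
      ∑ p ∈ permOrbit a x ×ˢ permOrbit a y, (graphCartan g p.1 p.2 : ℚ) := by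
  rw [foldedCartan', one_div, mul_comm, ← mul_assoc,
    mul_inv_cancel₀ (permOrbit.cast_card_ne_zero a x), one_mul]

theorem foldedCartan'_mul_card_comm (x y : I) :
    foldedCartan' g a x y * #(permOrbit a x) = foldedCartan' g a y x * #(permOrbit a y) := by
  rw [foldedCartan'_mul_card, foldedCartan'_mul_card, sum_product, sum_product_right]
  simp only [graphCartan_comm g _ (_ : I)]

theorem foldedCartan'_eq_sum (haut : ∀ x y, g.Adj (a x) (a y) ↔ g.Adj x y) (x y : I) :
    foldedCartan' g a x y = ∑ y' ∈ permOrbit a y, (graphCartan g x y' : ℚ) := by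
  have hM : ∀ u v, (graphCartan g (a u) (a v) : ℚ) = graphCartan g u v := fun u v => by
    rw [graphCartan_apply_apply g haut]
  rw [← mul_left_inj' (permOrbit.cast_card_ne_zero a x), foldedCartan'_mul_card,
    permOrbit.sum_product_eq_card_nsmul (M := fun u v => (graphCartan g u v : ℚ)) hM,
    nsmul_eq_mul, mul_comm]

end foldedCartan

/-- the folded matrix `C'` of a simply-laced Dynkin diagram (finite simple graph)
with an admissible automorphism is a generalized Cartan matrix. -/
theorem stmt_0 {I : Type*} [Fintype I] [DecidableEq I] (g : SimpleGraph I)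
    [DecidableRel g.Adj] (a : Equiv.Perm I)
    (haut : ∀ x y, g.Adj (a x) (a y) ↔ g.Adj x y)
    (hadm : ∀ x y, y ∈ permOrbit a x → ¬ g.Adj x y) :
    (∀ x y, y ∈ permOrbit a x → foldedCartan' g a x y = 2) ∧
    (∀ x y, y ∉ permOrbit a x →
      ∃ m : ℤ, foldedCartan' g a x y = (m : ℚ) ∧ m ≤ 0) ∧
    (∀ x y, foldedCartan' g a x y = 0 ↔ foldedCartan' g a y x = 0) := by
  refine ⟨fun x y hy => ?_, fun x y hy => ?_, fun x y => ?_⟩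
  · rw [foldedCartan'_eq_sum g haut, permOrbit.eq_of_mem a hy,
      sum_congr rfl fun y' hy' => by rw [graphCartan_of_not_adj g (hadm x y' hy')]]
    simp [permOrbit.mem_self]
  · refine ⟨∑ y' ∈ permOrbit a y, graphCartan g x y', by simp [foldedCartan'_eq_sum g haut],
      sum_nonpos fun y' hy' => graphCartan_nonpos_of_ne g ?_⟩
    rintro rfl
    exact hy ((permOrbit.mem_comm a).1 hy')
  · rw [← mul_eq_zero_iff_right (permOrbit.cast_card_ne_zero a x), foldedCartan'_mul_card_comm,
      mul_eq_zero_iff_right (permOrbit.cast_card_ne_zero a y)]
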